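/- Let G be a group, let A ≤ Aut(G) with Inn(G) ≤ A, and let S = G ⋊ A be the natural semidirect product (the subgroup GA of the holomorph of G). For every ordinal δ, writing G_δ = Z_δ(G,A) and G̅_δ for the image of G_δ under the canonical map G → Inn(G) ≤ A, the subgroup G_δ·G̅_δ of S is contained in Z_δ(S), the δ-th term of the transfinite upper central series of S. -/

import Mathlib

/-!  Transfinite upper central series, hypercenter, and `A`-central series
for a group `G` with `A ≤ Aut G` normalized by the inner automorphisms. -/

universe u v

open Subgroup

section Preamble

variable {G : Type u} [Group G]

/-- The subgroup `Inn(G) ≤ Aut(G)` of inner automorphisms. -/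
def Inn (G : Type u) [Group G] : Subgroup (MulAut G) :=
  (MulAut.conj : G →* MulAut G).range

/-- `A ≤ Aut(G)` is normalized by the inner automorphisms: `A^{Inn(G)} = A`. -/
def NormalizedByInn (A : Subgroup (MulAut G)) : Prop :=
  ∀ g : G, ∀ γ ∈ A, MulAut.conj g * γ * (MulAut.conj g)⁻¹ ∈ A

theorem normalizedByInn_of_le {A : Subgroup (MulAut G)} (h : Inn G ≤ A) :
    NormalizedByInn A := fun g _γ hγ =>
  mul_mem (mul_mem (h ⟨g, rfl⟩) hγ) (inv_mem (h ⟨g, rfl⟩))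

theorem normalizedByInn_of_comm {G : Type u} [CommGroup G] (A : Subgroup (MulAut G)) :
    NormalizedByInn A := by
  intro g γ hγ
  have h1 : (MulAut.conj : G →* MulAut G) g = 1 := by
    ext x
    simp [MulAut.conj_apply, mul_comm]
  rw [h1]
  simpa using hγ

/-- A supremum of normal subgroups is normal. -/
theorem normal_iSup_of_normal {ι : Sort v} (H : ι → Subgroup G) (h : ∀ i, (H i).Normal) :
    (⨆ i, H i).Normal := by
  constructor
  intro n hn g
  refine Subgroup.iSup_induction H (C := fun x => g * x * g⁻¹ ∈ ⨆ i, H i) hn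
    (fun i x hx => le_iSup H i ((h i).conj_mem x hx g)) (by simpa using one_mem _) ?_
  intro x y hx hy
  have key : g * (x * y) * g⁻¹ = g * x * g⁻¹ * (g * y * g⁻¹) := by group
  rw [key]
  exact mul_mem hx hy

/-- One step of the `A`-central series: given a normal subgroup `Z`, this is the preimage in
`G` of the fixed points `C_{G/Z}(A)` of `A` on `G/Z`, i.e. `{g | ∀ γ ∈ A, g⁻¹ • γ(g) ∈ Z}`. -/
def aStep (A : Subgroup (MulAut G)) (Z : Subgroup G) (hZ : Z.Normal) : Subgroup G where
  carrier := { g : G | ∀ γ ∈ A, g⁻¹ * γ g ∈ Z }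
  one_mem' := fun γ _ => by simpa using Z.one_mem
  mul_mem' := by
    intro a b ha hb γ hγ
    have key : (a * b)⁻¹ * γ (a * b) = b⁻¹ * (a⁻¹ * γ a) * b * (b⁻¹ * γ b) := by
      rw [map_mul]; group
    rw [key]
    refine mul_mem ?_ (hb γ hγ)
    simpa using hZ.conj_mem _ (ha γ hγ) b⁻¹
  inv_mem' := by
    intro a ha γ hγ
    have key : a⁻¹⁻¹ * γ a⁻¹ = a * (a⁻¹ * γ a)⁻¹ * a⁻¹ := by
      rw [map_inv]; group
    rw [key]
    exact hZ.conj_mem _ (inv_mem (ha γ hγ)) a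

theorem aStep_normal (A : Subgroup (MulAut G)) (hA : NormalizedByInn A)
    (Z : Subgroup G) (hZ : Z.Normal) : (aStep A Z hZ).Normal := by
  constructor
  intro n hn g γ hγ
  have hγ' : MulAut.conj g⁻¹ * γ * (MulAut.conj g⁻¹)⁻¹ ∈ A := hA g⁻¹ γ hγ
  have h := hn _ hγ'
  have key : (g * n * g⁻¹)⁻¹ * γ (g * n * g⁻¹) =
      g * (n⁻¹ * (MulAut.conj g⁻¹ * γ * (MulAut.conj g⁻¹)⁻¹) n) * g⁻¹ := by
    have h2 : (MulAut.conj g⁻¹ : MulAut G)⁻¹ = MulAut.conj g := by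
      rw [← map_inv, inv_inv]
    rw [h2]
    simp only [MulAut.mul_apply, MulAut.conj_apply]
    simp only [map_mul, map_inv]
    group
  rw [key]
  exact hZ.conj_mem _ h g

/-- The transfinite `A`-central series of `G` relative to a normal subgroup `L`
(i.e. the preimage in `G` of the `A`-central series of `G/L` for the induced action):
`Z_0 = L`, `Z_{α+1}/Z_α = C_{G/Z_α}(A)`, and unions at limit ordinals;
bundled with normality. -/
noncomputable def aCentralSeriesFromAux (A : Subgroup (MulAut G)) (hA : NormalizedByInn A)
    (L : Subgroup G) (hL : L.Normal) (o : Ordinal.{u}) : { Z : Subgroup G // Z.Normal } :=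
  Ordinal.limitRecOn o ⟨L, hL⟩
    (fun _ Z => ⟨aStep A Z.1 Z.2, aStep_normal A hA Z.1 Z.2⟩)
    (fun o _ ih => ⟨⨆ b : { b : Ordinal.{u} // b < o }, (ih b.1 b.2).1,
      normal_iSup_of_normal _ fun b => (ih b.1 b.2).2⟩)

/-- The `α`-th term `Z_α(G, A; L)` of the `A`-central series of `G` starting at `L`. -/
noncomputable def aCentralSeriesFrom (A : Subgroup (MulAut G)) (hA : NormalizedByInn A)
    (L : Subgroup G) (hL : L.Normal) (o : Ordinal.{u}) : Subgroup G :=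
  (aCentralSeriesFromAux A hA L hL o).1

/-- The `α`-th term `Z_α(G, A)` of the `A`-central series of `G`. -/
noncomputable def aCentralSeries (A : Subgroup (MulAut G)) (hA : NormalizedByInn A)
    (o : Ordinal.{u}) : Subgroup G :=
  aCentralSeriesFrom A hA ⊥ (by infer_instance) o

/-- The `A`-hypercenter `Z_∞(G, A)`: the terminal (stationary) term of the `A`-central
series, realized as the supremum of all its terms. -/
noncomputable def aHypercenter (A : Subgroup (MulAut G)) (hA : NormalizedByInn A) : Subgroup G :=
  ⨆ o : Ordinal.{u}, aCentralSeries A hA o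

/-- `G/L` is `A`-hypercentral (for the induced action of `A` on `G/L`), phrased via the
preimages in `G` of the terms of the `A`-central series of `G/L`. -/
noncomputable def aHypercenterFrom (A : Subgroup (MulAut G)) (hA : NormalizedByInn A)
    (L : Subgroup G) (hL : L.Normal) : Subgroup G :=
  ⨆ o : Ordinal.{u}, aCentralSeriesFrom A hA L hL o

/-- The transfinite upper central series of `G`, bundled with normality:
`Z_0 = 1`, `Z_{α+1}/Z_α = Z(G/Z_α)`, and unions at limit ordinals. -/
noncomputable def ucsOrdAux (G : Type u) [Group G] (o : Ordinal.{u}) :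
    { Z : Subgroup G // Z.Normal } :=
  Ordinal.limitRecOn o ⟨⊥, by infer_instance⟩
    (fun _ Z => by exact ⟨@Subgroup.upperCentralSeriesStep G _ Z.1 Z.2, by letI := Z.2; rw [Subgroup.upperCentralSeriesStep_eq_comap_center]; infer_instance⟩)
    (fun o _ ih => ⟨⨆ b : { b : Ordinal.{u} // b < o }, (ih b.1 b.2).1,
      normal_iSup_of_normal _ fun b => (ih b.1 b.2).2⟩)

/-- The `α`-th term `Z_α(G)` of the transfinite upper central series of `G`. -/
noncomputable def ucsOrd (G : Type u) [Group G] (o : Ordinal.{u}) : Subgroup G :=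
  (ucsOrdAux G o).1

/-- The hypercenter `Z_∞(G)`: the terminal (stationary) term of the transfinite upper
central series, realized as the supremum of all its terms. -/
noncomputable def hypercenter (G : Type u) [Group G] : Subgroup G :=
  ⨆ o : Ordinal.{u}, ucsOrd G o

/-- A group is hypercentral if it coincides with its hypercenter. -/
def IsHypercentral (G : Type u) [Group G] : Prop :=
  hypercenter G = ⊤

/-- A group is locally nilpotent if all its finitely generated subgroups are nilpotent. -/
def LocallyNilpotent (G : Type u) [Group G] : Prop :=
  ∀ H : Subgroup G, H.FG → Group.IsNilpotent H

/-- The inner automorphisms form a normal subgroup of `Aut(G)`. -/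
instance Inn.normal : (Inn G).Normal := by
  constructor
  rintro n ⟨x, rfl⟩ γ
  refine ⟨γ x, ?_⟩
  ext y
  simp [MulAut.conj_apply, MulAut.mul_apply, map_mul, map_inv, mul_assoc]

/-- The centralizer of a normal subgroup is normal. -/
instance centralizer_normal (H : Subgroup G) [hH : H.Normal] :
    (Subgroup.centralizer (H : Set G)).Normal := by
  constructor
  intro n hn g
  intro h hh
  have hh' : g⁻¹ * h * g ∈ H := by simpa using hH.conj_mem h hh g⁻¹
  have hc := hn (g⁻¹ * h * g) hh'
  have key1 : h * (g * n * g⁻¹) = g * (g⁻¹ * h * g * n) * g⁻¹ := by group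
  have key2 : g * n * g⁻¹ * h = g * (n * (g⁻¹ * h * g)) * g⁻¹ := by group
  rw [key1, key2, hc]

end Preamble

/-! Induction on `δ`; at limits both sides are unions. For the successor step it suffices that,
for `g ∈ Z_{δ+1}(G,A)`, both `g` and `g̅` commute modulo `Z_δ(S)` with the generators `h ∈ G` and
`γ ∈ A` of `S`. The four commutators are the images in `S` of `[g, h]` and `g γ(g)⁻¹`, which lie
in `Z_δ(G,A)` because `g` is `A`-central modulo it (for `[g, h]` take `γ` conjugation by `h`). -/

open scoped commutatorElement

section SeriesEquations

variable {G : Type u} [Group G] (A : Subgroup (MulAut G)) (hA : NormalizedByInn A)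

theorem aCentralSeries_normal (o : Ordinal.{u}) : (aCentralSeries A hA o).Normal :=
  (aCentralSeriesFromAux A hA ⊥ _ o).2

theorem aCentralSeries_zero : aCentralSeries A hA 0 = ⊥ := by
  unfold aCentralSeries aCentralSeriesFrom aCentralSeriesFromAux
  rw [Ordinal.limitRecOn_zero]

theorem aCentralSeries_add_one (o : Ordinal.{u}) :
    aCentralSeries A hA (o + 1) =
      aStep A (aCentralSeries A hA o) (aCentralSeries_normal A hA o) := by
  unfold aCentralSeries aCentralSeriesFrom aCentralSeriesFromAux
  rw [Ordinal.limitRecOn_add_one]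

theorem aCentralSeries_limit {o : Ordinal.{u}} (ho : Order.IsSuccLimit o) :
    aCentralSeries A hA o = ⨆ b : { b : Ordinal.{u} // b < o }, aCentralSeries A hA b.1 := by
  unfold aCentralSeries aCentralSeriesFrom aCentralSeriesFromAux
  rw [Ordinal.limitRecOn_limit _ _ _ _ ho]

end SeriesEquations

section UcsEquations

variable (G : Type u) [Group G]

theorem ucsOrd_normal (o : Ordinal.{u}) : (ucsOrd G o).Normal :=
  (ucsOrdAux G o).2

theorem ucsOrd_add_one (o : Ordinal.{u}) :
    ucsOrd G (o + 1) = @Subgroup.upperCentralSeriesStep G _ (ucsOrd G o) (ucsOrd_normal G o) := by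
  unfold ucsOrd ucsOrdAux
  rw [Ordinal.limitRecOn_add_one]

theorem ucsOrd_limit {o : Ordinal.{u}} (ho : Order.IsSuccLimit o) :
    ucsOrd G o = ⨆ b : { b : Ordinal.{u} // b < o }, ucsOrd G b.1 := by
  unfold ucsOrd ucsOrdAux
  rw [Ordinal.limitRecOn_limit _ _ _ _ ho]

end UcsEquations

section AStep

variable {G : Type u} [Group G] {A : Subgroup (MulAut G)} {Z : Subgroup G} {hZ : Z.Normal}
  {g : G}

theorem mul_inv_apply_mem_of_mem_aStep (hg : g ∈ aStep A Z hZ) {γ : MulAut G} (hγ : γ ∈ A) :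
    g * (γ g)⁻¹ ∈ Z := by
  simpa [mul_assoc] using hZ.conj_mem _ (inv_mem (hg γ hγ)) g

theorem commutatorElement_mem_of_mem_aStep (hIA : Inn G ≤ A) (hg : g ∈ aStep A Z hZ) (h : G) :
    ⁅g, h⁆ ∈ Z := by
  simpa [MulAut.conj_apply, commutatorElement_def, mul_assoc] using
    mul_inv_apply_mem_of_mem_aStep hg (hIA ⟨h, rfl⟩)

end AStep

namespace SemidirectProduct

variable {N H : Type*} [Group N] [Group H] {φ : H →* MulAut N}

theorem commutatorElement_inl_inr (n : N) (h : H) :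
    ⁅(inl n : N ⋊[φ] H), (inr h : N ⋊[φ] H)⁆ = inl (n * (φ h n)⁻¹) := by
  ext <;> simp [commutatorElement_def]

theorem commutatorElement_inr_inl (h : H) (n : N) :
    ⁅(inr h : N ⋊[φ] H), (inl n : N ⋊[φ] H)⁆ = inl (φ h n * n⁻¹) := by
  ext <;> simp [commutatorElement_def]

theorem mem_upperCentralSeriesStep_iff {U : Subgroup (N ⋊[φ] H)} [U.Normal] {s : N ⋊[φ] H} :
    s ∈ U.upperCentralSeriesStep ↔ (∀ n : N, ⁅s, inl n⁆ ∈ U) ∧ ∀ h : H, ⁅s, inr h⁆ ∈ U := by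
  refine ⟨fun hs => ⟨fun n => hs _, fun h => hs _⟩, fun ⟨hl, hr⟩ t => ?_⟩
  rw [← inl_left_mul_inr_right t, commutatorElement_mul_right_eq_mul_conj]
  simpa only [mul_assoc] using mul_mem (hl _) (Normal.conj_mem ‹_› _ (hr t.right) (inl t.left))

end SemidirectProduct

theorem MulAut.commutatorElement_conj {G : Type*} [Group G] (g : G) (γ : MulAut G) :
    ⁅MulAut.conj g, γ⁆ = MulAut.conj (g * (γ g)⁻¹) := by
  ext x
  simp [commutatorElement_def, mul_assoc]

section Holomorph

variable {G : Type u} [Group G] {A : Subgroup (MulAut G)}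

-- `g ↦ g̅`
def innerAutHom (hIA : Inn G ≤ A) : G →* A :=
  (MulAut.conj : G →* MulAut G).codRestrict A fun g => hIA ⟨g, rfl⟩

open SemidirectProduct

variable {Z : Subgroup G} {hZ : Z.Normal} {U : Subgroup (G ⋊[A.subtype] A)} [U.Normal] {g : G}

theorem inl_mem_upperCentralSeriesStep (hIA : Inn G ≤ A) (hg : g ∈ aStep A Z hZ)
    (hZl : Z.map inl ≤ U) : (inl g : G ⋊[A.subtype] A) ∈ U.upperCentralSeriesStep := by
  refine mem_upperCentralSeriesStep_iff.2 ⟨fun h => ?_, fun γ => ?_⟩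
  · rw [← map_commutatorElement]
    exact hZl (mem_map_of_mem _ (commutatorElement_mem_of_mem_aStep hIA hg h))
  · rw [commutatorElement_inl_inr]
    exact hZl (mem_map_of_mem _ (mul_inv_apply_mem_of_mem_aStep hg γ.2))

theorem inr_innerAutHom_mem_upperCentralSeriesStep (hIA : Inn G ≤ A) (hg : g ∈ aStep A Z hZ)
    (hZl : Z.map inl ≤ U) (hZr : (Z.map (innerAutHom hIA)).map inr ≤ U) :
    inr (innerAutHom hIA g) ∈ U.upperCentralSeriesStep := by
  refine mem_upperCentralSeriesStep_iff.2 ⟨fun h => ?_, fun γ => ?_⟩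
  · have hcomm : ⁅(inr (innerAutHom hIA g) : G ⋊[A.subtype] A), inl h⁆ =
        (inl ⁅g, h⁆ : G ⋊[A.subtype] A) := by
      rw [commutatorElement_inr_inl]
      rfl
    rw [hcomm]
    exact hZl (mem_map_of_mem _ (commutatorElement_mem_of_mem_aStep hIA hg h))
  · have hcomm : ⁅innerAutHom hIA g, γ⁆ = innerAutHom hIA (g * ((γ : MulAut G) g)⁻¹) :=
      Subtype.ext (MulAut.commutatorElement_conj g γ)
    rw [← map_commutatorElement, hcomm]
    exact hZr (mem_map_of_mem _ (mem_map_of_mem _ (mul_inv_apply_mem_of_mem_aStep hg γ.2)))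

end Holomorph

/-- **Claim (*) in the proof of Theorem 2.** Let `Inn(G) ≤ A ≤ Aut(G)` and let
`S = G ⋊ A` be the natural semidirect product.  For every ordinal `δ`, writing
`G_δ = Z_δ(G,A)` and `G̅_δ` for the image of `G_δ` in `Inn(G) ≤ A` (under conjugation),
the subgroup `G_δ ⬝ G̅_δ` of `S` is contained in `Z_δ(S)`. -/
theorem aCentralSeries_mul_inn_le_ucs_semidirect
    (G : Type u) [Group G] (A : Subgroup (MulAut G)) (hIA : Inn G ≤ A) (δ : Ordinal.{u}) :
    (aCentralSeries A (normalizedByInn_of_le hIA) δ).map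
        (SemidirectProduct.inl : G →* G ⋊[A.subtype] A) ⊔
      ((aCentralSeries A (normalizedByInn_of_le hIA) δ).map
          ((MulAut.conj : G →* MulAut G).codRestrict A (fun g => hIA ⟨g, rfl⟩))).map
        (SemidirectProduct.inr : ↥A →* G ⋊[A.subtype] A) ≤
      ucsOrd (G ⋊[A.subtype] A) δ := by
  change _ ⊔ ((aCentralSeries _ _ δ).map (innerAutHom hIA)).map _ ≤ _
  induction δ using Ordinal.limitRecOn with
  | zero => simp [aCentralSeries_zero]
  | add_one o ih =>
    haveI := ucsOrd_normal (G ⋊[A.subtype] A) o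
    rw [aCentralSeries_add_one, ucsOrd_add_one]
    refine sup_le ?_ ?_
    · rintro _ ⟨g, hg, rfl⟩
      exact inl_mem_upperCentralSeriesStep hIA hg (le_sup_left.trans ih)
    · rintro _ ⟨_, ⟨g, hg, rfl⟩, rfl⟩
      exact inr_innerAutHom_mem_upperCentralSeriesStep hIA hg (le_sup_left.trans ih)
        (le_sup_right.trans ih)
  | limit o ho ih =>
    rw [aCentralSeries_limit _ _ ho, ucsOrd_limit _ ho, Subgroup.map_iSup, Subgroup.map_iSup,
      Subgroup.map_iSup, ← iSup_sup_eq]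
    exact iSup_mono fun b => ih b.1 b.2
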